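/- arXiv:math/0310161 — 4 statements merged into one kernel-verified Lean document; each statement's English description precedes it below -/
import Mathlib

section
/- With C ≠ D invertible d×d real matrices and G = {T_{Ck} g_p}, H = {T_{Dk} h_p} Bessel sequences in L²(ℝ^d), if the operator Θ = Σ_p Σ_k ⟨·, T_{Ck} g_p⟩ T_{Dk} h_p commutes with T_{Cz} for all z ∈ ℤ^d, then Θ = 0. -/
/-!
Reindexing the series `k ↦ k - z` shows `Θ T_{Cz} = T_{Dz} Θ`; together with the commutation
hypothesis this gives `T_{Cz} (Θ v) = T_{Dz} (Θ v)`, so `Θ v` is invariant under translation by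
`Cz - Dz`, which is nonzero for a suitable unit vector `z` since `C ≠ D`. A nonzero `L^p` function
cannot be invariant under a nonzero translation: the slabs `{⌊x_i / β_i⌋ = n}` tile `ℝ^d`, are
permuted by the translation and would all carry the same positive mass of `|f|^p`.
-/

open MeasureTheory Matrix
open scoped InnerProductSpace

noncomputable section

/-- `L²(ℝ^d)`. -/
abbrev L2 (d : ℕ) := Lp ℂ 2 (volume : Measure (Fin d → ℝ))

/-- A sequence `x : J → H` is a Bessel sequence. -/
def Bessel {H J : Type*} [NormedAddCommGroup H] [InnerProductSpace ℂ H] (x : J → H) : Prop :=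
  ∃ M : ℝ, ∀ v : H, Summable (fun j => ‖⟪v, x j⟫_ℂ‖ ^ 2) ∧
    (∑' j, ‖⟪v, x j⟫_ℂ‖ ^ 2) ≤ M * ‖v‖ ^ 2

open scoped ENNReal

section Periodic

variable {E : Type*} [AddGroup E] [MeasurableSpace E] [MeasurableAdd E] {μ : Measure E}
  [μ.IsAddRightInvariant] {φ : E → ℝ} {β : E} {G : E → ℝ≥0∞}

theorem setLIntegral_floor_fiber_add_one (hφ : Measurable φ) (hφβ : ∀ x, φ (x - β) = φ x - 1)
    (hG : G =ᵐ[μ] fun x => G (x - β)) (n : ℤ) :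
    ∫⁻ x in (fun x => ⌊φ x⌋) ⁻¹' {n + 1}, G x ∂μ = ∫⁻ x in (fun x => ⌊φ x⌋) ⁻¹' {n}, G x ∂μ := by
  have hmeas : ∀ m : ℤ, MeasurableSet ((fun x => ⌊φ x⌋) ⁻¹' {m}) :=
    fun m => hφ.floor (measurableSet_singleton m)
  have hshift : ∀ x, x - β ∈ (fun x => ⌊φ x⌋) ⁻¹' {n} ↔ x ∈ (fun x => ⌊φ x⌋) ⁻¹' {n + 1} := by
    intro x
    simp only [Set.mem_preimage, Set.mem_singleton_iff, hφβ, Int.floor_sub_one]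
    omega
  rw [← lintegral_indicator (hmeas _), ← lintegral_indicator (hmeas _),
    ← lintegral_sub_right_eq_self (((fun x => ⌊φ x⌋) ⁻¹' {n}).indicator G) β]
  refine lintegral_congr_ae ?_
  filter_upwards [hG] with x hx
  classical
  simp only [Set.indicator_apply, hshift, ← hx]

theorem lintegral_eq_zero_of_ae_eq_comp_sub (hφ : Measurable φ)
    (hφβ : ∀ x, φ (x - β) = φ x - 1) (hG : G =ᵐ[μ] fun x => G (x - β))
    (hfin : ∫⁻ x, G x ∂μ ≠ ∞) : ∫⁻ x, G x ∂μ = 0 := by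
  set S : ℤ → Set E := fun n => (fun x => ⌊φ x⌋) ⁻¹' {n}
  have hS : ∀ n, ∫⁻ x in S n, G x ∂μ = ∫⁻ x in S 0, G x ∂μ := by
    intro n
    induction n using Int.induction_on with
    | zero => rfl
    | succ k ih => rw [setLIntegral_floor_fiber_add_one hφ hφβ hG, ih]
    | pred k ih => rw [← ih, ← setLIntegral_floor_fiber_add_one hφ hφβ hG, sub_add_cancel]
  have hsum : ∫⁻ x, G x ∂μ = ∑' _ : ℤ, ∫⁻ x in S 0, G x ∂μ := by
    have hcover : (⋃ n, S n) = Set.univ := Set.eq_univ_of_forall fun x => Set.mem_iUnion.2 ⟨_, rfl⟩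
    rw [← setLIntegral_univ, ← hcover,
      lintegral_iUnion (fun n => hφ.floor (measurableSet_singleton n)) (pairwise_disjoint_fiber _)]
    exact tsum_congr hS
  have hS0 : ∫⁻ x in S 0, G x ∂μ = 0 := by
    by_contra hne
    exact hfin (hsum.trans (ENNReal.tsum_const_eq_top_of_ne_zero hne))
  rw [hsum, hS0, tsum_zero]

end Periodic

theorem Lp.eq_zero_of_ae_eq_comp_sub {ι F : Type*} [Fintype ι] [NormedAddCommGroup F]
    {p : ℝ≥0∞} (hp0 : p ≠ 0) (hp : p ≠ ∞) {β : ι → ℝ} (hβ : β ≠ 0)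
    (f : Lp F p (volume : Measure (ι → ℝ))) (hf : ⇑f =ᵐ[volume] fun x => f (x - β)) : f = 0 := by
  obtain ⟨i, hi⟩ : ∃ i, β i ≠ 0 := Function.ne_iff.mp hβ
  have hG : (fun x => ‖f x‖ₑ ^ p.toReal) =ᵐ[volume] fun x => ‖f (x - β)‖ₑ ^ p.toReal := by
    filter_upwards [hf] with x hx
    rw [← hx]
  have hint : ∫⁻ x, ‖f x‖ₑ ^ p.toReal = 0 :=
    lintegral_eq_zero_of_ae_eq_comp_sub (φ := fun x => x i / β i)
      ((measurable_pi_apply i).div_const _) (fun x => by field_simp; simp) hG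
      (lintegral_rpow_enorm_lt_top_of_eLpNorm_lt_top hp0 hp (Lp.eLpNorm_lt_top f)).ne
  have hnorm : eLpNorm f p volume = 0 := by
    rw [eLpNorm_eq_lintegral_rpow_enorm_toReal hp0 hp, hint,
      ENNReal.zero_rpow_of_pos (by simp [ENNReal.toReal_pos hp0 hp])]
  exact Lp.eq_zero_iff_ae_eq_zero.mpr ((eLpNorm_eq_zero_iff (Lp.aestronglyMeasurable f) hp0).mp hnorm)

def Matrix.mulVecInt {m n : Type*} [Fintype n] (C : Matrix m n ℝ) : (n → ℤ) →+ (m → ℝ) :=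
  C.mulVecLin.toAddMonoidHom.comp ((Int.castAddHom ℝ).compLeft n)

theorem Matrix.exists_mulVecInt_ne {m n : Type*} [Fintype n] {C D : Matrix m n ℝ} (h : C ≠ D) :
    ∃ z, C.mulVecInt z ≠ D.mulVecInt z := by
  classical
  by_contra! hCD
  refine h (Matrix.ext fun i j => ?_)
  have hj := congrFun (hCD (Pi.single j 1)) i
  simpa [Matrix.mulVecInt, Pi.single_apply, Matrix.mulVec, dotProduct] using hj

def IsTranslationFamily {d : ℕ} (T : (Fin d → ℝ) → (L2 d →L[ℂ] L2 d)) : Prop :=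
  ∀ (α : Fin d → ℝ) (f : L2 d), ⇑(T α f) =ᵐ[volume] fun x => f (x - α)

namespace IsTranslationFamily

variable {d : ℕ} {T : (Fin d → ℝ) → (L2 d →L[ℂ] L2 d)}

theorem apply_apply (hT : IsTranslationFamily T) (α β : Fin d → ℝ) (f : L2 d) :
    T α (T β f) = T (α + β) f := by
  refine Lp.ext ((hT α _).trans ?_)
  have hβ := (measurePreserving_sub_right volume α).quasiMeasurePreserving.ae_eq_comp (hT β f)
  refine hβ.trans (.trans ?_ (hT (α + β) f).symm)
  filter_upwards with x
  simp [Function.comp, sub_sub]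

theorem zero_apply (hT : IsTranslationFamily T) (f : L2 d) : T 0 f = f :=
  Lp.ext ((hT 0 f).trans (by simp))

theorem inner_apply_apply (hT : IsTranslationFamily T) (α : Fin d → ℝ) (u w : L2 d) :
    ⟪T α u, T α w⟫_ℂ = ⟪u, w⟫_ℂ := by
  rw [L2.inner_def, L2.inner_def, ← integral_sub_right_eq_self (fun y => ⟪u y, w y⟫_ℂ) α]
  refine integral_congr_ae ?_
  filter_upwards [hT α u, hT α w] with x hu hw
  rw [hu, hw]

theorem inner_apply_left (hT : IsTranslationFamily T) (α : Fin d → ℝ) (u w : L2 d) :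
    ⟪T α u, w⟫_ℂ = ⟪u, T (-α) w⟫_ℂ := by
  conv_lhs => rw [← hT.zero_apply w, ← add_neg_cancel α, ← hT.apply_apply]
  exact hT.inner_apply_apply α u _

theorem eq_zero_of_apply_eq (hT : IsTranslationFamily T) {α β : Fin d → ℝ} (hαβ : α ≠ β)
    {u : L2 d} (h : T α u = T β u) : u = 0 := by
  have hfix : T (α - β) u = u := by
    rw [sub_eq_neg_add, ← hT.apply_apply, h, hT.apply_apply, neg_add_cancel, hT.zero_apply]
  refine Lp.eq_zero_of_ae_eq_comp_sub two_ne_zero ENNReal.ofNat_ne_top (sub_ne_zero.mpr hαβ) u ?_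
  simpa only [hfix] using hT (α - β) u

theorem apply_apply_eq_of_hasSum (hT : IsTranslationFamily T) {K P : Type*} [AddGroup K]
    (a b : K →+ (Fin d → ℝ)) (g h : P → L2 d) (Θ : L2 d →L[ℂ] L2 d)
    (hΘ : ∀ v, HasSum (fun pk : P × K => ⟪v, T (a pk.2) (g pk.1)⟫_ℂ • T (b pk.2) (h pk.1)) (Θ v))
    (z : K) (v : L2 d) : Θ (T (a z) v) = T (b z) (Θ v) := by
  have hshift : HasSum (fun pk : P × K => ⟪v, T (a pk.2) (g pk.1)⟫_ℂ • T (b z + b pk.2) (h pk.1))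
      (T (b z) (Θ v)) :=
    ((T (b z)).hasSum (hΘ v)).congr_fun fun pk => by rw [map_smul, hT.apply_apply]
  refine (hΘ _).unique
    (((Equiv.prodCongr (Equiv.refl P) (Equiv.subRight z)).hasSum_iff.mpr hshift).congr_fun ?_)
  rintro ⟨p, k⟩
  simp only [Function.comp_apply, Equiv.prodCongr_apply, Equiv.coe_refl, Prod.map_apply, id_eq,
    Equiv.subRight_apply, map_sub, hT.inner_apply_left, hT.apply_apply, neg_add_eq_sub,
    add_sub_cancel]

end IsTranslationFamily

theorem mixed_operator_zero_of_commutes_general {d : ℕ} {P : Type*}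
    (C D : Matrix (Fin d) (Fin d) ℝ)
    (g h : P → L2 d)
    (T : (Fin d → ℝ) → (L2 d →L[ℂ] L2 d))
    (hT : ∀ (α : Fin d → ℝ) (f : L2 d), (⇑(T α f)) =ᵐ[volume] fun x => f (x - α))
    (Θ : L2 d →L[ℂ] L2 d)
    (hΘ : ∀ v : L2 d, HasSum (fun pk : P × (Fin d → ℤ) =>
      ⟪v, T (C.mulVec fun i => (pk.2 i : ℝ)) (g pk.1)⟫_ℂ •
        T (D.mulVec fun i => (pk.2 i : ℝ)) (h pk.1)) (Θ v)) :
    C ≠ D →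
    (∀ (z : Fin d → ℤ) (v : L2 d),
      Θ (T (C.mulVec fun i => (z i : ℝ)) v) = T (C.mulVec fun i => (z i : ℝ)) (Θ v)) →
    Θ = 0 := by
  intro hCD hcomm
  have hT : IsTranslationFamily T := hT
  obtain ⟨z, hz⟩ := Matrix.exists_mulVecInt_ne hCD
  ext1 v
  have hintertwine : Θ (T (C.mulVecInt z) v) = T (D.mulVecInt z) (Θ v) :=
    hT.apply_apply_eq_of_hasSum C.mulVecInt D.mulVecInt g h Θ hΘ z v
  exact hT.eq_zero_of_apply_eq hz ((hcomm z v).symm.trans hintertwine)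

/-- For invertible `d×d` real matrices `C`, `D`, Bessel systems `{T_{Ck} g_p}` and
`{T_{Dk} h_p}` in `L²(ℝ^d)` and `Θ = ∑_p ∑_k ⟨·, T_{Ck} g_p⟩ T_{Dk} h_p`, if `C ≠ D` and `Θ`
commutes with `T_{Cz}` for all `z ∈ ℤ^d`, then `Θ = 0`. -/
theorem mixed_operator_zero_of_commutes {d : ℕ} {P : Type*} [Countable P]
    (C D : Matrix (Fin d) (Fin d) ℝ) (hC : IsUnit C.det) (hD : IsUnit D.det)
    (g h : P → L2 d)
    (T : (Fin d → ℝ) → (L2 d →L[ℂ] L2 d))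
    (hT : ∀ (α : Fin d → ℝ) (f : L2 d), (⇑(T α f)) =ᵐ[volume] fun x => f (x - α))
    (hG : Bessel (fun pk : P × (Fin d → ℤ) =>
      T (C.mulVec fun i => (pk.2 i : ℝ)) (g pk.1)))
    (hH : Bessel (fun pk : P × (Fin d → ℤ) =>
      T (D.mulVec fun i => (pk.2 i : ℝ)) (h pk.1)))
    (Θ : L2 d →L[ℂ] L2 d)
    (hΘ : ∀ v : L2 d, HasSum (fun pk : P × (Fin d → ℤ) =>
      ⟪v, T (C.mulVec fun i => (pk.2 i : ℝ)) (g pk.1)⟫_ℂ •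
        T (D.mulVec fun i => (pk.2 i : ℝ)) (h pk.1)) (Θ v)) :
    C ≠ D →
    (∀ (z : Fin d → ℤ) (v : L2 d),
      Θ (T (C.mulVec fun i => (z i : ℝ)) v) = T (C.mulVec fun i => (z i : ℝ)) (Θ v)) →
    Θ = 0 :=
  mixed_operator_zero_of_commutes_general C D g h T hT Θ hΘ
end
end

section
/- If C ≠ D are invertible d×d real matrices, then the Bessel sequences G = {T_{Ck} g_p : p ∈ P, k ∈ ℤ^d} and H = {T_{Dk} h_p : p ∈ P, k ∈ ℤ^d} in L²(ℝ^d) cannot be dual frames, i.e., Σ_p Σ_k ⟨f, T_{Ck} g_p⟩ T_{Dk} h_p = f cannot hold for all f ∈ L²(ℝ^d). -/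
open MeasureTheory Matrix
open scoped InnerProductSpace

noncomputable section

section Aux

variable {d : ℕ} (T : (Fin d → ℝ) → (L2 d →L[ℂ] L2 d))
  (hT : ∀ (α : Fin d → ℝ) (f : L2 d), (⇑(T α f)) =ᵐ[volume] fun x => f (x - α))

include hT

lemma Tcomp (α β : Fin d → ℝ) (f : L2 d) : T α (T β f) = T (α + β) f := by
  refine Lp.ext ?_
  refine (hT α (T β f)).trans (Filter.EventuallyEq.trans ?_ (hT (α + β) f).symm)
  refine ((measurePreserving_sub_right volume α).quasiMeasurePreserving.ae_eq_comp
    (hT β f)).trans ?_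
  filter_upwards with x
  show f (x - α - β) = f (x - (α + β))
  rw [sub_sub]

lemma Tzero (f : L2 d) : T 0 f = f := by
  refine Lp.ext ((hT 0 f).trans ?_)
  filter_upwards with x
  rw [sub_zero]

lemma innerT (α : Fin d → ℝ) (f g : L2 d) : ⟪T α f, T α g⟫_ℂ = ⟪f, g⟫_ℂ := by
  rw [MeasureTheory.L2.inner_def, MeasureTheory.L2.inner_def]
  have h1 : ∫ x, ⟪(T α f) x, (T α g) x⟫_ℂ ∂volume
      = ∫ x, ⟪f (x - α), g (x - α)⟫_ℂ ∂volume := by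
    refine integral_congr_ae ?_
    filter_upwards [hT α f, hT α g] with x h1 h2
    rw [h1, h2]
  rw [h1]
  exact integral_sub_right_eq_self (fun x => ⟪f x, g x⟫_ℂ) α

lemma innerShift (α β : Fin d → ℝ) (f g : L2 d) :
    ⟪T α f, T β g⟫_ℂ = ⟪f, T (β - α) g⟫_ℂ := by
  have := innerT T hT α f (T (β - α) g)
  rwa [Tcomp T hT, add_sub_cancel] at this

/-- If translation by `v` agrees with translation by `w` on every `f ∈ L²`, then `v = w`. -/
lemma translations_eq (v w : Fin d → ℝ)
    (heq : ∀ f : L2 d, T v f = T w f) : v = w := by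
  by_contra hvw
  set r : ℝ := dist v w / 2 with hr_def
  have hr : 0 < r := by
    have := dist_pos.mpr hvw
    positivity
  set s : Set (Fin d → ℝ) := Metric.ball (0 : Fin d → ℝ) r with hs_def
  have hμs : volume s ≠ ⊤ := measure_ball_lt_top.ne
  set f : L2 d := indicatorConstLp 2 measurableSet_ball hμs (1 : ℂ) with hf_def
  have hf : ⇑f =ᵐ[volume] s.indicator (fun _ => (1 : ℂ)) := indicatorConstLp_coeFn
  have hae : (fun x => f (x - v)) =ᵐ[volume] fun x => f (x - w) := by
    have h1 := hT v f
    have h2 := hT w f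
    rw [heq f] at h1
    exact h1.symm.trans h2
  -- transfer to indicators of balls
  have hkey : (fun x => (Metric.ball v r).indicator (fun _ => (1 : ℂ)) x)
      =ᵐ[volume] fun x => (Metric.ball w r).indicator (fun _ => (1 : ℂ)) x := by
    have hv := (measurePreserving_sub_right volume v).quasiMeasurePreserving.ae_eq_comp hf
    have hw := (measurePreserving_sub_right volume w).quasiMeasurePreserving.ae_eq_comp hf
    have hindv : ∀ u : Fin d → ℝ, ∀ x,
        s.indicator (fun _ => (1 : ℂ)) (x - u) = (Metric.ball u r).indicator (fun _ => (1 : ℂ)) x := by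
      intro u x
      have : x - u ∈ s ↔ x ∈ Metric.ball u r := by
        simp [hs_def, Metric.mem_ball, dist_eq_norm, sub_zero]
      by_cases hx : x ∈ Metric.ball u r
      · rw [Set.indicator_of_mem (this.mpr hx), Set.indicator_of_mem hx]
      · rw [Set.indicator_of_notMem (fun hh => hx (this.mp hh)), Set.indicator_of_notMem hx]
    have hv' : (fun x => f (x - v)) =ᵐ[volume]
        fun x => (Metric.ball v r).indicator (fun _ => (1 : ℂ)) x := by
      refine hv.trans ?_
      filter_upwards with x
      exact hindv v x
    have hw' : (fun x => f (x - w)) =ᵐ[volume]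
        fun x => (Metric.ball w r).indicator (fun _ => (1 : ℂ)) x := by
      refine hw.trans ?_
      filter_upwards with x
      exact hindv w x
    exact hv'.symm.trans (hae.trans hw')
  -- the two balls are disjoint
  have hdisj : ∀ x, x ∈ Metric.ball v r → x ∉ Metric.ball w r := by
    intro x hx hx'
    have : dist v w < r + r := by
      calc dist v w ≤ dist v x + dist x w := dist_triangle v x w
        _ < r + r := by
            rw [dist_comm v x]
            exact add_lt_add (Metric.mem_ball.mp hx) (Metric.mem_ball.mp hx')
    rw [hr_def] at this
    linarith
  -- so the set where the indicators differ contains `ball v r`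
  have hsub : Metric.ball v r ⊆
      {x | (Metric.ball v r).indicator (fun _ => (1 : ℂ)) x ≠
        (Metric.ball w r).indicator (fun _ => (1 : ℂ)) x} := by
    intro x hx
    rw [Set.mem_setOf_eq, Set.indicator_of_mem hx, Set.indicator_of_notMem (hdisj x hx)]
    exact one_ne_zero
  have h0 : volume {x | (Metric.ball v r).indicator (fun _ => (1 : ℂ)) x ≠
      (Metric.ball w r).indicator (fun _ => (1 : ℂ)) x} = 0 := by
    rw [Filter.EventuallyEq, ae_iff] at hkey
    exact hkey
  have : volume (Metric.ball v r) = 0 := measure_mono_null hsub h0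
  exact absurd this (Metric.measure_ball_pos volume v hr).ne'

end Aux

set_option maxHeartbeats 1000000 in
/-- For invertible `d×d` real matrices `C`, `D`, Bessel systems `{T_{Ck} g_p}` and
`{T_{Dk} h_p}` in `L²(ℝ^d)` with `C ≠ D`, the systems cannot be dual frames, i.e.
`∑_p ∑_k ⟨f, T_{Ck} g_p⟩ T_{Dk} h_p = f` cannot hold for all `f ∈ L²(ℝ^d)`. -/
theorem not_dual_of_different_lattices {d : ℕ} {P : Type*} [Countable P]
    (C D : Matrix (Fin d) (Fin d) ℝ) (hC : IsUnit C.det) (hD : IsUnit D.det)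
    (g h : P → L2 d)
    (T : (Fin d → ℝ) → (L2 d →L[ℂ] L2 d))
    (hT : ∀ (α : Fin d → ℝ) (f : L2 d), (⇑(T α f)) =ᵐ[volume] fun x => f (x - α))
    (hG : Bessel (fun pk : P × (Fin d → ℤ) =>
      T (C.mulVec fun i => (pk.2 i : ℝ)) (g pk.1)))
    (hH : Bessel (fun pk : P × (Fin d → ℤ) =>
      T (D.mulVec fun i => (pk.2 i : ℝ)) (h pk.1)))
    (hCD : C ≠ D)
    (hdual : ∀ f : L2 d, HasSum (fun pk : P × (Fin d → ℤ) =>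
      ⟪f, T (C.mulVec fun i => (pk.2 i : ℝ)) (g pk.1)⟫_ℂ •
        T (D.mulVec fun i => (pk.2 i : ℝ)) (h pk.1)) f) :
    False := by
  classical
  -- coercion of integer vectors
  set coev : (Fin d → ℤ) → (Fin d → ℝ) := fun n i => (n i : ℝ) with hcoev
  have hcoe_add : ∀ k n : Fin d → ℤ, coev (k + n) = coev k + coev n := by
    intro k n; funext i; simp [hcoev]
  -- Key: the mixed frame operator intertwines the two translation lattices,
  -- hence `T (C n) = T (D n)` on all of `L²`.
  have key : ∀ n : Fin d → ℤ, ∀ f : L2 d,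
      T (C.mulVec (coev n)) f = T (D.mulVec (coev n)) f := by
    intro n f
    set cn := C.mulVec (coev n) with hcn
    set dn := D.mulVec (coev n) with hdn
    -- apply `T dn` to the expansion of `f`
    have h2 : HasSum (fun pk : P × (Fin d → ℤ) =>
        ⟪f, T (C.mulVec (coev pk.2)) (g pk.1)⟫_ℂ •
          T (dn + D.mulVec (coev pk.2)) (h pk.1)) (T dn f) := by
      have h0 := (T dn).hasSum (hdual f)
      refine h0.congr_fun fun pk => ?_
      rw [_root_.map_smul, Tcomp T hT]
    -- expand `T cn f` and reindex
    have h1 := hdual (T cn f)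
    have h1' : HasSum (fun pk : P × (Fin d → ℤ) =>
        ⟪T cn f, T (C.mulVec (coev (pk.2 + n))) (g pk.1)⟫_ℂ •
          T (D.mulVec (coev (pk.2 + n))) (h pk.1)) (T cn f) :=
      ((Equiv.prodCongr (Equiv.refl P) (Equiv.addRight n)).hasSum_iff).mpr h1
    have h1'' : HasSum (fun pk : P × (Fin d → ℤ) =>
        ⟪f, T (C.mulVec (coev pk.2)) (g pk.1)⟫_ℂ •
          T (dn + D.mulVec (coev pk.2)) (h pk.1)) (T cn f) := by
      refine h1'.congr_fun ?_
      intro pk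
      have hc : C.mulVec (coev (pk.2 + n)) = C.mulVec (coev pk.2) + cn := by
        rw [hcoe_add, Matrix.mulVec_add, hcn]
      have hd : D.mulVec (coev (pk.2 + n)) = dn + D.mulVec (coev pk.2) := by
        rw [hcoe_add, Matrix.mulVec_add, hdn, add_comm]
      rw [hc, hd, innerShift T hT, add_sub_cancel_right]
    exact h1''.unique h2
  -- `C ≠ D` gives a differing column, and `T (C e_j) = T (D e_j)` on `L²`
  have hentry : ∃ i j : Fin d, C i j ≠ D i j := by
    by_contra hc
    push_neg at hc
    exact hCD (by ext i j; exact hc i j)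
  obtain ⟨i, j, hij⟩ := hentry
  set n : Fin d → ℤ := Pi.single j 1 with hn
  have hcoen : coev n = Pi.single j (1 : ℝ) := by
    funext i'
    by_cases hi' : i' = j
    · subst hi'; simp [hn, hcoev]
    · simp [hn, hcoev, Pi.single_apply, hi']
  have hvw : C.mulVec (coev n) = D.mulVec (coev n) :=
    translations_eq T hT _ _ (key n)
  have hcol : C.mulVec (coev n) i = C i j ∧ D.mulVec (coev n) i = D i j := by
    rw [hcoen, Matrix.mulVec_single, Matrix.mulVec_single]
    constructor <;> simp
  exact hij (by rw [← hcol.1, ← hcol.2, hvw])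
end
end

section
/- Let A be an expansive d×d real matrix. Then the set ∪_{n∈ℤ} A^n ℤ^d is dense in ℝ^d. -/
/-!
The complex eigenvalues of `A⁻¹` are the inverses of those of `A`, so they lie in the open unit
disc; by Gelfand's formula `A⁻ᵏ → 0`. Rounding `Aᵏ x` to a lattice point `z` then gives
`‖A⁻ᵏ z - x‖ ≤ ‖A⁻ᵏ‖ / 2`, which is small for large `k`.
-/

open Matrix

/-- A real matrix is expansive if all of its (complex) eigenvalues have modulus
strictly greater than `1`. -/
def Matrix.Expansive {d : ℕ} (A : Matrix (Fin d) (Fin d) ℝ) : Prop :=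
  ∀ z : ℂ, (A.map (algebraMap ℝ ℂ)).charpoly.IsRoot z → 1 < ‖z‖

open Filter Topology
open scoped ENNReal

section SpectralRadius

variable {𝔸 : Type*} [NormedRing 𝔸] [NormedAlgebra ℂ 𝔸] [CompleteSpace 𝔸]

theorem tendsto_pow_nhds_zero_of_spectralRadius_lt_one {a : 𝔸} (h : spectralRadius ℂ a < 1) :
    Tendsto (a ^ ·) atTop (𝓝 0) := by
  obtain ⟨c, hρc, hc1⟩ := exists_between h
  have hle : ∀ᶠ n : ℕ in atTop, (‖a ^ n‖₊ : ℝ≥0∞) ≤ c ^ n := by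
    filter_upwards [(spectrum.gelfand_formula a).eventually_lt_const hρc,
      eventually_ne_atTop 0] with n hn hn0
    calc (‖a ^ n‖₊ : ℝ≥0∞) = ((‖a ^ n‖₊ : ℝ≥0∞) ^ (1 / n : ℝ)) ^ (n : ℝ) := by
          rw [← ENNReal.rpow_mul, one_div_mul_cancel (by exact_mod_cast hn0), ENNReal.rpow_one]
      _ ≤ c ^ (n : ℝ) := by gcongr
      _ = c ^ n := ENNReal.rpow_natCast c n
  have hnorm : Tendsto (fun n : ℕ => (‖a ^ n‖₊ : ℝ≥0∞)) atTop (𝓝 0) :=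
    tendsto_of_tendsto_of_tendsto_of_le_of_le' tendsto_const_nhds
      (ENNReal.tendsto_pow_atTop_nhds_zero_of_lt_one hc1) (.of_forall fun _ => zero_le) hle
  rw [← ENNReal.coe_zero, ENNReal.tendsto_coe] at hnorm
  exact tendsto_zero_iff_norm_tendsto_zero.2 (NNReal.tendsto_coe.2 hnorm)

theorem tendsto_pow_nhds_zero_of_forall_norm_lt_one {a : 𝔸}
    (h : ∀ z ∈ spectrum ℂ a, ‖z‖ < 1) : Tendsto (a ^ ·) atTop (𝓝 0) := by
  rcases subsingleton_or_nontrivial 𝔸 with _ | _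
  · simpa only [Subsingleton.elim _ (0 : 𝔸)] using tendsto_const_nhds
  · exact tendsto_pow_nhds_zero_of_spectralRadius_lt_one <| by
      simpa using spectrum.spectralRadius_lt_of_forall_lt a (r := 1) fun z hz => mod_cast h z hz

end SpectralRadius

namespace Matrix

variable {n : Type*} [Fintype n]

theorem exists_intCast_norm_sub_le (y : n → ℝ) :
    ∃ z : n → ℤ, ‖(fun i => (z i : ℝ)) - y‖ ≤ 1 / 2 :=
  ⟨fun i => round (y i), (pi_norm_le_iff_of_nonneg (by norm_num)).2 fun i => by
    simpa [abs_sub_comm] using abs_sub_round (y i)⟩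

section OperatorNorm

variable [DecidableEq n]

-- These norms induce the entrywise topology, so the statements below do not depend on them.
attribute [local instance] Matrix.linftyOpNormedRing Matrix.linftyOpNormedAlgebra

theorem tendsto_pow_nhds_zero_of_forall_norm_lt_one {B : Matrix n n ℝ}
    (h : ∀ z ∈ spectrum ℂ (B.map (algebraMap ℝ ℂ)), ‖z‖ < 1) :
    Tendsto (B ^ ·) atTop (𝓝 0) := by
  have hre := ((continuous_id.matrix_map Complex.continuous_re).tendsto 0).comp
    (_root_.tendsto_pow_nhds_zero_of_forall_norm_lt_one h)
  have hpow (k : ℕ) : ((B.map (algebraMap ℝ ℂ)) ^ k).map Complex.re = B ^ k := by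
    rw [← RingHom.mapMatrix_apply, ← map_pow, RingHom.mapMatrix_apply, map_map]
    ext
    simp
  simpa only [Function.comp_def, id_eq, hpow, Matrix.map_zero _ Complex.zero_re] using hre

theorem dense_setOf_mulVec_intCast {M : ℕ → Matrix n n ℝ} (hM : ∀ k, IsUnit (M k).det)
    (h : Tendsto M atTop (𝓝 0)) :
    Dense {x : n → ℝ | ∃ (k : ℕ) (z : n → ℤ), M k *ᵥ (fun i => (z i : ℝ)) = x} := by
  rw [Metric.dense_iff]
  intro x ε hε
  obtain ⟨k, hk⟩ := ((tendsto_zero_iff_norm_tendsto_zero.1 h).eventually_lt_const hε).exists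
  obtain ⟨z, hz⟩ := exists_intCast_norm_sub_le ((M k)⁻¹ *ᵥ x)
  set v : n → ℝ := fun i => (z i : ℝ)
  have hsub : M k *ᵥ v - x = M k *ᵥ (v - (M k)⁻¹ *ᵥ x) := by
    rw [mulVec_sub, mulVec_mulVec, mul_nonsing_inv _ (hM k), one_mulVec]
  refine ⟨M k *ᵥ v, ?_, k, z, rfl⟩
  rw [Metric.mem_ball, dist_eq_norm, hsub]
  calc ‖M k *ᵥ (v - (M k)⁻¹ *ᵥ x)‖ ≤ ‖M k‖ * ‖v - (M k)⁻¹ *ᵥ x‖ := linfty_opNorm_mulVec _ _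
    _ ≤ ‖M k‖ * (1 / 2) := by gcongr
    _ < ε := by linarith [norm_nonneg (M k)]

end OperatorNorm

namespace Expansive

variable {d : ℕ} {A : Matrix (Fin d) (Fin d) ℝ}

theorem one_lt_norm_of_mem_spectrum (hA : A.Expansive) {z : ℂ}
    (hz : z ∈ spectrum ℂ (A.map (algebraMap ℝ ℂ))) : 1 < ‖z‖ :=
  hA z (mem_spectrum_iff_isRoot_charpoly.1 hz)

theorem isUnit_map (hA : A.Expansive) : IsUnit (A.map (algebraMap ℝ ℂ)) := by
  by_contra h
  have := hA.one_lt_norm_of_mem_spectrum ((spectrum.zero_mem_iff ℂ).2 h)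
  norm_num at this

theorem isUnit_det (hA : A.Expansive) : IsUnit A.det := by
  have := (isUnit_iff_isUnit_det _).1 hA.isUnit_map
  rw [← RingHom.mapMatrix_apply, ← RingHom.map_det] at this
  simpa using this

theorem norm_lt_one_of_mem_spectrum_inv (hA : A.Expansive) {z : ℂ}
    (hz : z ∈ spectrum ℂ (A⁻¹.map (algebraMap ℝ ℂ))) : ‖z‖ < 1 := by
  have hinv : A⁻¹.map (algebraMap ℝ ℂ) = ↑hA.isUnit_map.unit⁻¹ := by
    rw [coe_units_inv, hA.isUnit_map.unit_spec]
    refine (inv_eq_left_inv ?_).symm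
    rw [← RingHom.mapMatrix_apply, ← RingHom.mapMatrix_apply, ← map_mul,
      nonsing_inv_mul _ hA.isUnit_det, map_one]
  rw [hinv, ← spectrum.map_inv, Set.mem_inv] at hz
  have := hA.one_lt_norm_of_mem_spectrum hz
  rw [norm_inv, one_lt_inv_iff₀] at this
  exact this.2

theorem tendsto_inv_pow_nhds_zero (hA : A.Expansive) : Tendsto (A⁻¹ ^ ·) atTop (𝓝 0) :=
  tendsto_pow_nhds_zero_of_forall_norm_lt_one fun _ => hA.norm_lt_one_of_mem_spectrum_inv

end Expansive

end Matrix

theorem dense_iUnion_zpow_smul_lattice_general {d : ℕ} (A : Matrix (Fin d) (Fin d) ℝ)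
    (hA : A.Expansive) :
    Dense {x : Fin d → ℝ |
      ∃ (n : ℤ) (z : Fin d → ℤ), (A ^ n).mulVec (fun i => (z i : ℝ)) = x} := by
  have hdet (k : ℕ) : IsUnit (A⁻¹ ^ k).det := by
    rw [det_pow]
    exact (isUnit_nonsing_inv_det A hA.isUnit_det).pow k
  refine (dense_setOf_mulVec_intCast hdet hA.tendsto_inv_pow_nhds_zero).mono ?_
  rintro _ ⟨k, z, rfl⟩
  exact ⟨-k, z, by rw [zpow_neg_natCast, inv_pow']⟩

/-- If `A` is an expansive `d×d` real matrix, then `⋃_{n∈ℤ} A^n ℤ^d` is dense in `ℝ^d`. -/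
theorem dense_iUnion_zpow_smul_lattice {d : ℕ} (A : Matrix (Fin d) (Fin d) ℝ)
    (hA : A.Expansive) (hAdet : IsUnit A.det) :
    Dense {x : Fin d → ℝ |
      ∃ (n : ℤ) (z : Fin d → ℤ), (A ^ n).mulVec (fun i => (z i : ℝ)) = x} :=
  dense_iUnion_zpow_smul_lattice_general A hA
end

section
/- Let A, B be expansive matrices and suppose the affine systems U_A(Ψ) = {D_A^n T_z ψ_i} and U_B(Φ) = {D_B^n T_z φ_i} (n ∈ ℤ, z ∈ ℤ^d, i = 1,…,r) are Bessel. Define Θ⁺ = Σ_i Σ_{n>0} Σ_z ⟨·, D_A^n T_z ψ_i⟩ D_B^n T_z φ_i, Θ⁻ analogously with n<0, and Θ⁰ = Σ_i Σ_z ⟨·, T_z ψ_i⟩ T_z φ_i. Then D_B^{−1} Θ⁺ D_A = Θ⁺ + Θ⁰; consequently Θ⁰ = 0 implies Θ⁺ = 0, and conversely Θ⁺ = 0 implies Θ⁰ = 0. -/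
/-!
Unitarity of `D_A` turns the `(i, n, z)` term of `Θ⁺ (D_A v)`, after applying `D_B⁻¹`, into the
`(i, n - 1, z)` term of `Θ⁺ v`, so `D_B⁻¹ Θ⁺ D_A` is the same series summed over `n ≥ 0`, that is
`Θ⁺ + Θ⁰`. If `Θ⁰ = 0`, iterating this identity shows that `Θ⁺ v` is also the sum over `n > N` for
every `N`; since tails of a convergent series tend to `0`, `Θ⁺ v = 0`. Only the group law and the
unitarity of the dilations enter, so the argument runs for any unitary `ℤ`-actions `U`, `V` on a
Hilbert space in place of `D_A^n`, `D_B^n`.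
-/

open MeasureTheory Matrix
open scoped InnerProductSpace

noncomputable section

section Summation

variable {ι G : Type*} [AddCommGroup G] [TopologicalSpace G] [IsTopologicalAddGroup G]
  [T1Space G]

theorem eq_zero_of_forall_hasSum_indicator_tail {f : ι → G} {k : ι → ℤ} {S : G}
    (h : ∀ N : ℕ, HasSum ({i | (N : ℤ) < k i}.indicator f) S) : S = 0 := by
  by_contra hS
  obtain ⟨s, hs⟩ := (h 0).summable.tsum_vanishing
    (isOpen_compl_singleton.mem_nhds (Ne.symm hS))
  obtain ⟨M, hM⟩ := (s.image k).bddAbove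
  have hdisj : Disjoint {i | (M.toNat : ℤ) < k i} s := by
    refine Set.disjoint_left.2 fun i hi his => ?_
    have := hM (Finset.mem_coe.2 (Finset.mem_image_of_mem k his))
    simp only [Set.mem_ofPred_eq] at hi
    omega
  have htail := hs _ hdisj
  rw [tsum_subtype, Set.indicator_indicator, Set.inter_eq_left.2 fun i hi => ?_,
    (h _).tsum_eq] at htail
  · exact htail rfl
  · simp only [Set.mem_ofPred_eq] at hi ⊢
    omega

theorem hasSum_indicator_of_hasSum_comp {γ E : Type*} [AddCommMonoid E] [TopologicalSpace E]
    {f : ι → E} {g : γ → ι} (hg : Function.Injective g) {s : Set ι} (hs : Set.range g = s)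
    {S : E} (h : HasSum (f ∘ g) S) : HasSum (s.indicator f) S :=
  hs ▸ hasSum_subtype_iff_indicator.1 (hg.hasSum_range_iff.2 h)

end Summation

section ZAction

variable {H : Type*} [NormedAddCommGroup H] [InnerProductSpace ℂ H]

structure IsZAction (U : ℤ → H →L[ℂ] H) : Prop where
  zero_apply : ∀ x, U 0 x = x
  add_apply : ∀ m n x, U m (U n x) = U (m + n) x

structure IsUnitaryZAction (U : ℤ → H →L[ℂ] H) : Prop extends IsZAction U where
  inner_map_left : ∀ m x y, ⟪U m x, y⟫_ℂ = ⟪x, U (-m) y⟫_ℂ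

theorem IsZAction.apply_neg_apply {U : ℤ → H →L[ℂ] H} (hU : IsZAction U) (n : ℤ) (x : H) :
    U n (U (-n) x) = x := by
  rw [hU.add_apply, add_neg_cancel, hU.zero_apply]

end ZAction

section Dilation

variable {d : ℕ}

theorem Matrix.measurable_mulVec (M : Matrix (Fin d) (Fin d) ℝ) : Measurable M.mulVec :=
  (continuous_const.matrix_mulVec continuous_id).measurable

theorem Matrix.map_mulVec_volume {M : Matrix (Fin d) (Fin d) ℝ} (hM : M.det ≠ 0) :
    Measure.map M.mulVec volume = ENNReal.ofReal |M.det⁻¹| • (volume : Measure (Fin d → ℝ)) := by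
  simpa only [Matrix.toLin'_apply', Matrix.coe_mulVecLin] using
    Real.map_matrix_volume_pi_eq_smul_volume_pi hM

theorem Matrix.quasiMeasurePreserving_mulVec {M : Matrix (Fin d) (Fin d) ℝ} (hM : M.det ≠ 0) :
    Measure.QuasiMeasurePreserving M.mulVec volume volume :=
  ⟨M.measurable_mulVec, by
    rw [Matrix.map_mulVec_volume hM]; exact Measure.AbsolutelyContinuous.rfl.smul_left _⟩

theorem Matrix.integral_comp_mulVec {E : Type*} [NormedAddCommGroup E] [NormedSpace ℝ E]
    {M : Matrix (Fin d) (Fin d) ℝ} (hM : M.det ≠ 0) {g : (Fin d → ℝ) → E}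
    (hg : AEStronglyMeasurable g volume) :
    ∫ x, g (M *ᵥ x) = |M.det|⁻¹ • ∫ y, g y := by
  rw [← integral_map M.measurable_mulVec.aemeasurable
      (hg.mono_ac (M.quasiMeasurePreserving_mulVec hM).absolutelyContinuous),
    Matrix.map_mulVec_volume hM, integral_smul_measure, ENNReal.toReal_ofReal (abs_nonneg _),
    abs_inv]

theorem inner_eq_of_ae_eq_dilate {M : Matrix (Fin d) (Fin d) ℝ} (hM : M.det ≠ 0)
    {f f' g g' : L2 d} (hg : ⇑g =ᵐ[volume] fun x => (Real.sqrt |M.det| : ℂ) * f (M *ᵥ x))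
    (hg' : ⇑g' =ᵐ[volume] fun x => (Real.sqrt |M.det| : ℂ) * f' (M *ᵥ x)) :
    ⟪g, g'⟫_ℂ = ⟪f, f'⟫_ℂ := by
  have hmeas : AEStronglyMeasurable (fun y => ⟪f y, f' y⟫_ℂ) volume :=
    (Lp.aestronglyMeasurable f).inner (Lp.aestronglyMeasurable f')
  have hsq : ((Real.sqrt |M.det| : ℝ) : ℂ) * ((Real.sqrt |M.det| : ℝ) : ℂ) =
      ((|M.det| : ℝ) : ℂ) := by
    rw [← Complex.ofReal_mul, Real.mul_self_sqrt (abs_nonneg _)]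
  calc ⟪g, g'⟫_ℂ = ∫ x, ((|M.det| : ℝ) : ℂ) * ⟪f (M *ᵥ x), f' (M *ᵥ x)⟫_ℂ := by
        rw [L2.inner_def]
        refine integral_congr_ae ?_
        filter_upwards [hg, hg'] with x hx hx'
        simp only [hx, hx', RCLike.inner_apply, map_mul, Complex.conj_ofReal, ← hsq]
        ring
    _ = ((|M.det| : ℝ) : ℂ) * ((|M.det|⁻¹ : ℝ) • ∫ y, ⟪f y, f' y⟫_ℂ) := by
        rw [integral_const_mul, Matrix.integral_comp_mulVec hM hmeas]
    _ = ⟪f, f'⟫_ℂ := by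
        rw [L2.inner_def, Complex.real_smul, ← mul_assoc, ← Complex.ofReal_mul,
          mul_inv_cancel₀ (abs_ne_zero.2 hM), Complex.ofReal_one, one_mul]

def IsDilationZPow (A : Matrix (Fin d) (Fin d) ℝ) (D : ℤ → L2 d →L[ℂ] L2 d) : Prop :=
  ∀ (n : ℤ) (f : L2 d), ⇑(D n f) =ᵐ[volume]
    fun x => (Real.sqrt |(A ^ n).det| : ℂ) * f ((A ^ n).mulVec x)

namespace IsDilationZPow

variable {A : Matrix (Fin d) (Fin d) ℝ} {D : ℤ → L2 d →L[ℂ] L2 d}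

theorem isZAction (hA : IsUnit A.det) (hD : IsDilationZPow A D) : IsZAction D where
  zero_apply f := Lp.ext <| by
    filter_upwards [hD 0 f] with x hx
    simpa using hx
  add_apply m n f := Lp.ext <| by
    filter_upwards [hD m (D n f), (Matrix.quasiMeasurePreserving_mulVec
      (hA.det_zpow m).ne_zero).ae_eq_comp (hD n f), hD (m + n) f] with x hm hn hmn
    simp only [Function.comp_apply] at hn
    rw [hm, hmn, hn, Matrix.mulVec_mulVec, ← Matrix.zpow_add hA,
      add_comm n m, Matrix.zpow_add hA, Matrix.det_mul, abs_mul, Real.sqrt_mul (abs_nonneg _)]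
    push_cast
    ring

theorem inner_map_map (hA : IsUnit A.det) (hD : IsDilationZPow A D) (n : ℤ) (v w : L2 d) :
    ⟪D n v, D n w⟫_ℂ = ⟪v, w⟫_ℂ :=
  inner_eq_of_ae_eq_dilate (hA.det_zpow n).ne_zero (hD n v) (hD n w)

theorem isUnitaryZAction (hA : IsUnit A.det) (hD : IsDilationZPow A D) :
    IsUnitaryZAction D where
  toIsZAction := hD.isZAction hA
  inner_map_left m v u := by
    conv_lhs => rw [← (hD.isZAction hA).apply_neg_apply m u]
    exact hD.inner_map_map hA m v (D (-m) u)

end IsDilationZPow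

end Dilation

section AffineSystem

variable {H α β : Type*} [NormedAddCommGroup H] [InnerProductSpace ℂ H]

def affineTerm (U V : ℤ → H →L[ℂ] H) (a b : α → β → H) (v : H) (w : α × ℤ × β) : H :=
  ⟪v, U w.2.1 (a w.1 w.2.2)⟫_ℂ • V w.2.1 (b w.1 w.2.2)

variable {U V : ℤ → H →L[ℂ] H} {a b : α → β → H}

theorem hasSum_indicator_affineTerm_of_subtype {p : ℤ → Prop} {v S : H}
    (h : HasSum (fun w : α × {n : ℤ // p n} × β => affineTerm U V a b v (w.1, w.2.1, w.2.2)) S) :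
    HasSum ({w : α × ℤ × β | p w.2.1}.indicator (affineTerm U V a b v)) S := by
  refine hasSum_indicator_of_hasSum_comp
    (g := fun w : α × {n : ℤ // p n} × β => (w.1, w.2.1.1, w.2.2)) ?_ ?_ h
  · rintro ⟨i, n, z⟩ ⟨i', n', z'⟩ he
    simp_all [Prod.ext_iff, Subtype.ext_iff]
  · ext ⟨i, n, z⟩
    refine ⟨?_, fun hn => ⟨(i, ⟨n, hn⟩, z), rfl⟩⟩
    rintro ⟨⟨_, ⟨_, hn⟩, _⟩, he⟩
    simp only [Prod.mk.injEq] at he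
    exact he.2.1 ▸ hn

theorem hasSum_indicator_affineTerm_of_zero (hU : IsZAction U) (hV : IsZAction V) {v S : H}
    (h : HasSum (fun w : α × β => ⟪v, a w.1 w.2⟫_ℂ • b w.1 w.2) S) :
    HasSum ({w : α × ℤ × β | w.2.1 = 0}.indicator (affineTerm U V a b v)) S := by
  refine hasSum_indicator_of_hasSum_comp (g := fun w : α × β => (w.1, 0, w.2)) ?_ ?_ ?_
  · rintro ⟨i, z⟩ ⟨i', z'⟩ he
    simp_all [Prod.ext_iff]
  · ext ⟨i, n, z⟩
    exact ⟨by rintro ⟨_, he⟩; simp_all [Prod.ext_iff], fun hn => ⟨(i, z), by simp_all⟩⟩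
  · simpa only [Function.comp_def, affineTerm, hU.zero_apply, hV.zero_apply] using h

theorem affineTerm_shift (hU : IsUnitaryZAction U) (hV : IsZAction V) (k : ℤ) (v : H)
    (w : α × ℤ × β) :
    V (-k) (affineTerm U V a b (U k v) w) = affineTerm U V a b v (w.1, w.2.1 - k, w.2.2) := by
  simp only [affineTerm, map_smul, hU.inner_map_left, hU.add_apply, hV.add_apply, neg_add_eq_sub]

theorem HasSum.indicator_affineTerm_shift (hU : IsUnitaryZAction U) (hV : IsZAction V)
    {k N : ℤ} {v S : H}
    (h : HasSum ({w : α × ℤ × β | N < w.2.1}.indicator (affineTerm U V a b (U k v))) S) :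
    HasSum ({w : α × ℤ × β | N - k < w.2.1}.indicator (affineTerm U V a b v)) (V (-k) S) := by
  refine ((Equiv.refl α).prodCongr ((Equiv.subRight k).prodCongr (Equiv.refl β))).hasSum_iff.1 ?_
  convert (V (-k)).hasSum h using 1
  funext ⟨i, n, z⟩
  by_cases hn : N < n
  · simp [Set.indicator_of_mem, hn, affineTerm_shift hU hV]
  · simp [Set.indicator_of_notMem, hn]

theorem affine_conj_eq_add (hU : IsUnitaryZAction U) (hV : IsZAction V) {P Z : H → H}
    (hP : ∀ v, HasSum (fun w : α × {n : ℤ // 0 < n} × β =>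
      affineTerm U V a b v (w.1, w.2.1, w.2.2)) (P v))
    (hZ : ∀ v, HasSum (fun w : α × β => ⟪v, a w.1 w.2⟫_ℂ • b w.1 w.2) (Z v)) (v : H) :
    V (-1) (P (U 1 v)) = P v + Z v := by
  have hconj := (hasSum_indicator_affineTerm_of_subtype (hP (U 1 v))).indicator_affineTerm_shift
    hU hV
  have hsplit : {w : α × ℤ × β | 0 - 1 < w.2.1} = {w | 0 < w.2.1} ∪ {w | w.2.1 = 0} := by
    ext w
    simp only [Set.mem_ofPred_eq, Set.mem_union]
    omega
  rw [hsplit, Set.indicator_union_of_disjoint (Set.disjoint_left.2 fun w h h' => by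
    simp only [Set.mem_ofPred_eq] at h h'; omega)] at hconj
  exact hconj.unique ((hasSum_indicator_affineTerm_of_subtype (hP v)).add
    (hasSum_indicator_affineTerm_of_zero hU.toIsZAction hV (hZ v)))

theorem affine_eq_zero_of_conj_eq (hU : IsUnitaryZAction U)
    (hV : IsZAction V) {P : H → H}
    (hP : ∀ v, HasSum (fun w : α × {n : ℤ // 0 < n} × β =>
      affineTerm U V a b v (w.1, w.2.1, w.2.2)) (P v))
    (hconj : ∀ v, V (-1) (P (U 1 v)) = P v) (v : H) : P v = 0 := by
  have hP' : ∀ v, V 1 (P (U (-1) v)) = P v := fun v => by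
    rw [← hconj (U (-1) v), hU.apply_neg_apply, hV.apply_neg_apply]
  have tails : ∀ (N : ℕ) v,
      HasSum ({w : α × ℤ × β | (N : ℤ) < w.2.1}.indicator (affineTerm U V a b v)) (P v) := by
    intro N
    induction N with
    | zero => exact fun v => by simpa using hasSum_indicator_affineTerm_of_subtype (hP v)
    | succ N ih =>
      intro v
      have := (ih (U (-1) v)).indicator_affineTerm_shift hU hV
      rwa [neg_neg, hP', sub_neg_eq_add, ← Nat.cast_add_one] at this
  exact eq_zero_of_forall_hasSum_indicator_tail (fun N => tails N v)

end AffineSystem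

theorem affine_theta_plus_identity_general {d r : ℕ}
    (A B : Matrix (Fin d) (Fin d) ℝ)
    (hAdet : IsUnit A.det) (hBdet : IsUnit B.det)
    (ψ φ : Fin r → L2 d)
    (T : (Fin d → ℝ) → (L2 d →L[ℂ] L2 d))
    (DApow DBpow : ℤ → (L2 d →L[ℂ] L2 d))
    (hDApow : ∀ (n : ℤ) (f : L2 d), (⇑(DApow n f)) =ᵐ[volume]
      fun x => (Real.sqrt |(A ^ n).det| : ℂ) * f ((A ^ n).mulVec x))
    (hDBpow : ∀ (n : ℤ) (f : L2 d), (⇑(DBpow n f)) =ᵐ[volume]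
      fun x => (Real.sqrt |(B ^ n).det| : ℂ) * f ((B ^ n).mulVec x))
    (Θp Θ0 : L2 d →L[ℂ] L2 d)
    (hΘp : ∀ v : L2 d, HasSum (fun w : Fin r × {n : ℤ // 0 < n} × (Fin d → ℤ) =>
      ⟪v, DApow w.2.1 (T (fun i => (w.2.2 i : ℝ)) (ψ w.1))⟫_ℂ •
        DBpow w.2.1 (T (fun i => (w.2.2 i : ℝ)) (φ w.1))) (Θp v))
    (hΘ0 : ∀ v : L2 d, HasSum (fun w : Fin r × (Fin d → ℤ) =>
      ⟪v, T (fun i => (w.2 i : ℝ)) (ψ w.1)⟫_ℂ •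
        T (fun i => (w.2 i : ℝ)) (φ w.1)) (Θ0 v)) :
    (∀ v : L2 d, DBpow (-1) (Θp (DApow 1 v)) = Θp v + Θ0 v) ∧ (Θ0 = 0 ↔ Θp = 0) := by
  have hU := IsDilationZPow.isUnitaryZAction hAdet hDApow
  have hV := IsDilationZPow.isZAction hBdet hDBpow
  have hP : ∀ v, HasSum (fun w : Fin r × {n : ℤ // 0 < n} × (Fin d → ℤ) =>
      affineTerm DApow DBpow (fun i z => T (fun j => (z j : ℝ)) (ψ i))
        (fun i z => T (fun j => (z j : ℝ)) (φ i)) v (w.1, w.2.1, w.2.2)) (Θp v) := hΘp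
  have hconj := affine_conj_eq_add hU hV hP hΘ0
  refine ⟨hconj, fun hΘ0_eq => ?_, fun hΘp_eq => ?_⟩
  · refine ContinuousLinearMap.ext fun v => ?_
    refine affine_eq_zero_of_conj_eq hU hV hP (fun v => ?_) v
    simpa [hΘ0_eq] using hconj v
  · refine ContinuousLinearMap.ext fun v => ?_
    simpa [hΘp_eq] using (hconj v).symm

/-- For expansive matrices `A`, `B` with Bessel affine systems `U_A(Ψ)`, `U_B(Φ)`, with
`Θ⁺ = ∑_i ∑_{n>0} ∑_z ⟨·, D_A^n T_z ψ_i⟩ D_B^n T_z φ_i`, `Θ⁻` its analogue for `n<0` and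
`Θ⁰ = ∑_i ∑_z ⟨·, T_z ψ_i⟩ T_z φ_i`, one has `D_B⁻¹ Θ⁺ D_A = Θ⁺ + Θ⁰`; consequently
`Θ⁰ = 0` implies `Θ⁺ = 0` and conversely. -/
theorem affine_theta_plus_identity {d r : ℕ}
    (A B : Matrix (Fin d) (Fin d) ℝ) (hA : A.Expansive) (hB : B.Expansive)
    (hAdet : IsUnit A.det) (hBdet : IsUnit B.det)
    (ψ φ : Fin r → L2 d)
    (T : (Fin d → ℝ) → (L2 d →L[ℂ] L2 d))
    (hT : ∀ (α : Fin d → ℝ) (f : L2 d), (⇑(T α f)) =ᵐ[volume] fun x => f (x - α))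
    (DApow DBpow : ℤ → (L2 d →L[ℂ] L2 d))
    (hDApow : ∀ (n : ℤ) (f : L2 d), (⇑(DApow n f)) =ᵐ[volume]
      fun x => (Real.sqrt |(A ^ n).det| : ℂ) * f ((A ^ n).mulVec x))
    (hDBpow : ∀ (n : ℤ) (f : L2 d), (⇑(DBpow n f)) =ᵐ[volume]
      fun x => (Real.sqrt |(B ^ n).det| : ℂ) * f ((B ^ n).mulVec x))
    (hGA : Bessel (fun w : Fin r × ℤ × (Fin d → ℤ) =>
      DApow w.2.1 (T (fun i => (w.2.2 i : ℝ)) (ψ w.1))))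
    (hGB : Bessel (fun w : Fin r × ℤ × (Fin d → ℤ) =>
      DBpow w.2.1 (T (fun i => (w.2.2 i : ℝ)) (φ w.1))))
    (Θp Θm Θ0 : L2 d →L[ℂ] L2 d)
    (hΘp : ∀ v : L2 d, HasSum (fun w : Fin r × {n : ℤ // 0 < n} × (Fin d → ℤ) =>
      ⟪v, DApow w.2.1 (T (fun i => (w.2.2 i : ℝ)) (ψ w.1))⟫_ℂ •
        DBpow w.2.1 (T (fun i => (w.2.2 i : ℝ)) (φ w.1))) (Θp v))
    (hΘm : ∀ v : L2 d, HasSum (fun w : Fin r × {n : ℤ // n < 0} × (Fin d → ℤ) =>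
      ⟪v, DApow w.2.1 (T (fun i => (w.2.2 i : ℝ)) (ψ w.1))⟫_ℂ •
        DBpow w.2.1 (T (fun i => (w.2.2 i : ℝ)) (φ w.1))) (Θm v))
    (hΘ0 : ∀ v : L2 d, HasSum (fun w : Fin r × (Fin d → ℤ) =>
      ⟪v, T (fun i => (w.2 i : ℝ)) (ψ w.1)⟫_ℂ •
        T (fun i => (w.2 i : ℝ)) (φ w.1)) (Θ0 v)) :
    (∀ v : L2 d, DBpow (-1) (Θp (DApow 1 v)) = Θp v + Θ0 v) ∧ (Θ0 = 0 ↔ Θp = 0) :=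
  affine_theta_plus_identity_general A B hAdet hBdet ψ φ T DApow DBpow hDApow hDBpow Θp Θ0 hΘp hΘ0
end
end
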